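/- If G is a connected graph of order n ≥ 3 and diameter d with η_p(G) = k, then n ≤ k·(d^{k−1} − (d−1)^{k−1}). -/
import Mathlib

open SimpleGraph Set

/-- Distance from a vertex to a set of vertices. -/
noncomputable def pDist {V : Type*} (G : SimpleGraph V) (v : V) (S : Set V) : ℕ :=
  sInf (G.dist v '' S)

/-- A family of sets of vertices is resolving if every pair of distinct vertices
is distinguished by its distance to some part. -/
def IsResolvingFam {V : Type*} (G : SimpleGraph V) (P : Set (Set V)) : Prop :=
  ∀ u v : V, u ≠ v → ∃ S ∈ P, pDist G u S ≠ pDist G v S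

/-- A family of sets is dominating if every vertex is at distance exactly 1 from some part. -/
def IsDominatingFam {V : Type*} (G : SimpleGraph V) (P : Set (Set V)) : Prop :=
  ∀ v : V, ∃ S ∈ P, pDist G v S = 1

/-- The partition domination number: minimum cardinality of a dominating partition. -/
noncomputable def gammaP {V : Type*} (G : SimpleGraph V) : ℕ :=
  sInf {k | ∃ P : Set (Set V), Setoid.IsPartition P ∧ IsDominatingFam G P ∧ P.ncard = k}

/-- The partition dimension: minimum cardinality of a resolving partition. -/
noncomputable def betaP {V : Type*} (G : SimpleGraph V) : ℕ :=
  sInf {k | ∃ P : Set (Set V), Setoid.IsPartition P ∧ IsResolvingFam G P ∧ P.ncard = k}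

/-- The dominating partition dimension: minimum cardinality of a resolving dominating partition. -/
noncomputable def etaP {V : Type*} (G : SimpleGraph V) : ℕ :=
  sInf {k | ∃ P : Set (Set V), Setoid.IsPartition P ∧ IsResolvingFam G P ∧
    IsDominatingFam G P ∧ P.ncard = k}

/-- A resolving set of vertices. -/
def IsResolvingSet {V : Type*} (G : SimpleGraph V) (S : Set V) : Prop :=
  ∀ u v : V, u ≠ v → ∃ x ∈ S, G.dist u x ≠ G.dist v x

/-- A dominating set of vertices. -/
def IsDominatingSet {V : Type*} (G : SimpleGraph V) (S : Set V) : Prop :=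
  ∀ v : V, v ∉ S → ∃ u ∈ S, G.Adj u v

/-- The resolving domination number η(G). -/
noncomputable def etaNum {V : Type*} (G : SimpleGraph V) : ℕ :=
  sInf {k | ∃ S : Set V, IsResolvingSet G S ∧ IsDominatingSet G S ∧ S.ncard = k}

/-- A twin set: pairwise twin vertices. -/
def IsTwinSet {V : Type*} (G : SimpleGraph V) (W : Set V) : Prop :=
  ∀ u ∈ W, ∀ v ∈ W, ∀ w : V, w ≠ u → w ≠ v → G.dist u w = G.dist v w

/-- The join of two graphs. -/
def gJoin {α β : Type*} (G : SimpleGraph α) (H : SimpleGraph β) : SimpleGraph (α ⊕ β) :=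
  SimpleGraph.fromRel (fun x y =>
    (∃ a b, x = Sum.inl a ∧ y = Sum.inl b ∧ G.Adj a b) ∨
    (∃ a b, x = Sum.inr a ∧ y = Sum.inr b ∧ H.Adj a b) ∨
    (∃ a b, x = Sum.inl a ∧ y = Sum.inr b))

/-- The disjoint union of two graphs. -/
def gUnion {α β : Type*} (G : SimpleGraph α) (H : SimpleGraph β) : SimpleGraph (α ⊕ β) :=
  SimpleGraph.fromRel (fun x y =>
    (∃ a b, x = Sum.inl a ∧ y = Sum.inl b ∧ G.Adj a b) ∨
    (∃ a b, x = Sum.inr a ∧ y = Sum.inr b ∧ H.Adj a b))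

section Helpers

variable {V : Type*}

lemma pDist_eq_zero_of_mem (G : SimpleGraph V) {v : V} {S : Set V} (h : v ∈ S) :
    pDist G v S = 0 :=
  Nat.eq_zero_of_le_zero (Nat.sInf_le ⟨v, h, G.dist_self⟩)

lemma one_le_pDist {G : SimpleGraph V} (hG : G.Connected) {v : V} {S : Set V}
    (hS : S.Nonempty) (hv : v ∉ S) : 1 ≤ pDist G v S := by
  have hne : (G.dist v '' S).Nonempty := hS.image _
  obtain ⟨x, hx, hxd⟩ := Nat.sInf_mem hne
  rw [pDist, ← hxd]
  exact hG.pos_dist_of_ne (fun h => hv (h ▸ hx))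

lemma pDist_le_diam {G : SimpleGraph V} (h : G.ediam ≠ ⊤) {v : V} {S : Set V}
    (hS : S.Nonempty) : pDist G v S ≤ G.diam := by
  obtain ⟨x, hx⟩ := hS
  exact le_trans (Nat.sInf_le ⟨x, hx, rfl⟩) (G.dist_le_diam h)

lemma ediam_ne_top' [Fintype V] {G : SimpleGraph V} (hG : G.Connected) :
    G.ediam ≠ ⊤ := by
  have hb : G.ediam ≤ Finset.univ.sup fun p : V × V => G.edist p.1 p.2 := by
    rw [SimpleGraph.ediam_def]
    exact iSup_le fun p =>
      Finset.le_sup (f := fun p : V × V => G.edist p.1 p.2) (Finset.mem_univ p)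
  refine ne_top_of_le_ne_top ?_ hb
  rw [← lt_top_iff_ne_top, Finset.sup_lt_iff (by simp)]
  intro p _
  exact lt_top_iff_ne_top.mpr (SimpleGraph.edist_ne_top_iff_reachable.mpr
    (hG.preconnected p.1 p.2))

lemma pDist_singleton (G : SimpleGraph V) (v u : V) :
    pDist G v {u} = G.dist v u := by
  rw [pDist, Set.image_singleton, csInf_singleton _]

open scoped Classical in
lemma exists_rdp [Fintype V] {G : SimpleGraph V} (hG : G.Connected)
    (hn : Nontrivial V) :
    ∃ P : Set (Set V), Setoid.IsPartition P ∧ IsResolvingFam G P ∧ IsDominatingFam G P := by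
  refine ⟨{S | ∃ v, S = {v}}, ⟨?_, ?_⟩, ?_, ?_⟩
  · rintro ⟨v, hv⟩
    exact (Set.singleton_ne_empty v) hv.symm
  · intro a
    refine ⟨{a}, ⟨⟨a, rfl⟩, rfl⟩, ?_⟩
    rintro b ⟨⟨w, rfl⟩, hab⟩
    simp only [Set.mem_singleton_iff] at hab
    subst hab; rfl
  · intro u v huv
    refine ⟨{u}, ⟨u, rfl⟩, ?_⟩
    rw [pDist_singleton, pDist_singleton, G.dist_self]
    exact fun h => (hG.pos_dist_of_ne (Ne.symm huv)).ne h
  · intro v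
    obtain ⟨u, hadj⟩ : ∃ u, G.Adj v u := by
      obtain ⟨w, hw⟩ := exists_ne v
      obtain ⟨p⟩ := hG.preconnected v w
      cases p with
      | nil => exact absurd rfl hw
      | cons h p => exact ⟨_, h⟩
    exact ⟨{u}, ⟨u, rfl⟩, by
      rw [pDist_singleton]; exact SimpleGraph.dist_eq_one_iff_adj.mpr hadj⟩

open scoped Classical in
lemma card_fun_exists_zero {A : Type*} [Fintype A] (d : ℕ) [NeZero d] :
    Fintype.card {f : A → Fin d // ∃ a, f a = 0} =
      d ^ Fintype.card A - (d - 1) ^ Fintype.card A := by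
  have hne : Fintype.card {x : Fin d // x ≠ 0} = d - 1 := by
    have := Fintype.card_subtype_compl (fun x : Fin d => x = 0)
    rwa [Fintype.card_subtype_eq, Fintype.card_fin] at this
  have h1 : Fintype.card {f : A → Fin d // ¬ ∃ a, f a = 0} = (d - 1) ^ Fintype.card A := by
    have e1 : {f : A → Fin d // ¬ ∃ a, f a = 0} ≃ {f : A → Fin d // ∀ a, f a ≠ 0} :=
      Equiv.subtypeEquivRight (fun f => by push_neg; exact Iff.rfl)
    rw [Fintype.card_congr (e1.trans (Equiv.subtypePiEquivPi (p := fun _ b => b ≠ 0))),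
      Fintype.card_pi]
    simp [hne]
  have h2 := Fintype.card_subtype_compl (fun f : A → Fin d => ∃ a, f a = 0)
  have h3 : Fintype.card {f : A → Fin d // ∃ a, f a = 0} ≤ Fintype.card (A → Fin d) :=
    Fintype.card_subtype_le _
  have h4 : Fintype.card (A → Fin d) = d ^ Fintype.card A := by
    rw [Fintype.card_fun, Fintype.card_fin]
  rw [h1, h4] at h2
  rw [h4] at h3
  obtain ⟨x, hx⟩ : ∃ x, Fintype.card {f : A → Fin d // ∃ a, f a = 0} = x := ⟨_, rfl⟩
  rw [hx] at h2 h3 ⊢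
  clear hx h1 hne h4
  omega

end Helpers

set_option maxHeartbeats 1000000 in
theorem stmt_11 {V : Type*} [Fintype V] (G : SimpleGraph V) (hG : G.Connected)
    (hn : 3 ≤ Fintype.card V) (k : ℕ) (hk : etaP G = k) :
    Fintype.card V ≤ k * (G.diam ^ (k - 1) - (G.diam - 1) ^ (k - 1)) := by
  classical
  have hnt : Nontrivial V := Fintype.one_lt_card_iff_nontrivial.mp (by omega)
  have hetop : G.ediam ≠ ⊤ := ediam_ne_top' hG
  obtain ⟨u0, v0, huv0⟩ := exists_pair_ne V
  have hd1 : 1 ≤ G.diam := le_trans (hG.pos_dist_of_ne huv0) (G.dist_le_diam hetop)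
  haveI : NeZero G.diam := ⟨by omega⟩
  set d := G.diam with hdd
  obtain ⟨P0, hP0a, hP0b, hP0c⟩ := exists_rdp hG hnt
  have hmem : k ∈ {k | ∃ P : Set (Set V), Setoid.IsPartition P ∧ IsResolvingFam G P ∧
      IsDominatingFam G P ∧ P.ncard = k} := by
    rw [← hk, etaP]
    exact Nat.sInf_mem ⟨P0.ncard, P0, hP0a, hP0b, hP0c, rfl⟩
  obtain ⟨P, hPart, hRes, hDom, hcard⟩ := hmem
  haveI : Fintype ↥P := Fintype.ofFinite _
  have hcardP : Fintype.card ↥P = k := by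
    rw [← hcard, ← Nat.card_coe_set_eq, Nat.card_eq_fintype_card]
  have hex : ∀ v : V, ∃ S : Set V, S ∈ P ∧ v ∈ S := fun v => (hPart.2 v).exists
  choose part hmemP hself using hex
  have huniq : ∀ (v : V) (S : Set V), S ∈ P → v ∈ S → S = part v := fun v S hS hv =>
    (hPart.2 v).unique ⟨hS, hv⟩ ⟨hmemP v, hself v⟩
  have hPne : ∀ S ∈ P, S.Nonempty := fun S hS =>
    Set.nonempty_iff_ne_empty.mpr (fun h => hPart.1 (h ▸ hS))
  have hZero : ∀ v, pDist G v (part v) = 0 := fun v => pDist_eq_zero_of_mem G (hself v)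
  have hge1 : ∀ (v : V) (S : Set V), S ∈ P → S ≠ part v → 1 ≤ pDist G v S :=
    fun v S hS hne => one_le_pDist hG (hPne S hS) (fun hv => hne (huniq v S hS hv))
  have hled : ∀ (v : V) (S : Set V), S ∈ P → pDist G v S ≤ d :=
    fun v S hS => pDist_le_diam hetop (hPne S hS)
  let Φ : V → Σ S : ↥P, {f : {T : ↥P // T ≠ S} → Fin d // ∃ a, f a = 0} := fun v =>
    ⟨⟨part v, hmemP v⟩,
     ⟨fun T => ⟨pDist G v T.1.1 - 1, by
        have h1 := hge1 v T.1.1 T.1.2 (fun h => T.2 (Subtype.ext h))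
        have h2 := hled v T.1.1 T.1.2
        omega⟩,
      by
        obtain ⟨S, hS, hS1⟩ := hDom v
        have hne : S ≠ part v := fun h => by
          rw [h, hZero v] at hS1; exact absurd hS1 (by omega)
        refine ⟨⟨⟨S, hS⟩, fun h => hne (congrArg Subtype.val h)⟩, ?_⟩
        apply Fin.ext
        simp [hS1]⟩⟩
  have hginj : Function.Injective (fun v (S : ↥P) => pDist G v S.1) := by
    intro u v h
    by_contra hne
    obtain ⟨S, hS, hSne⟩ := hRes u v hne
    exact hSne (congrFun h ⟨S, hS⟩)
  have hfac : ∀ v, (fun S : ↥P => pDist G v S.1) =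
      (fun x : Σ S : ↥P, {f : {T : ↥P // T ≠ S} → Fin d // ∃ a, f a = 0} =>
        fun S : ↥P => if h : S = x.1 then 0 else ((x.2.1 ⟨S, h⟩ : Fin d) : ℕ) + 1) (Φ v) := by
    intro v
    funext S
    show pDist G v S.1 = if _h : S = (⟨part v, hmemP v⟩ : ↥P) then 0
      else pDist G v S.1 - 1 + 1
    by_cases h : S = (⟨part v, hmemP v⟩ : ↥P)
    · rw [dif_pos h, h]
      exact hZero v
    · rw [dif_neg h]
      have h1 := hge1 v S.1 S.2 (fun hh => h (Subtype.ext hh))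
      omega
  have hΦinj : Function.Injective Φ := by
    intro u v h
    apply hginj
    show (fun S : ↥P => pDist G u S.1) = (fun S : ↥P => pDist G v S.1)
    rw [hfac u, hfac v, h]
  have hle := Fintype.card_le_of_injective Φ hΦinj
  rw [Fintype.card_sigma] at hle
  have hterm : ∀ S : ↥P,
      Fintype.card {f : {T : ↥P // T ≠ S} → Fin d // ∃ a, f a = 0} =
        d ^ (k - 1) - (d - 1) ^ (k - 1) := by
    intro S
    have h1 : Fintype.card {T : ↥P // T ≠ S} = k - 1 := by
      have := Fintype.card_subtype_compl (fun T : ↥P => T = S)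
      rwa [Fintype.card_subtype_eq, hcardP] at this
    rw [← h1]
    convert card_fun_exists_zero (A := {T : ↥P // T ≠ S}) d using 2
  calc Fintype.card V
      ≤ ∑ S : ↥P, Fintype.card {f : {T : ↥P // T ≠ S} → Fin d // ∃ a, f a = 0} := hle
    _ = ∑ _S : ↥P, (d ^ (k - 1) - (d - 1) ^ (k - 1)) :=
        Finset.sum_congr rfl (fun S _ => hterm S)
    _ = k * (d ^ (k - 1) - (d - 1) ^ (k - 1)) := by
        rw [Finset.sum_const, Finset.card_univ, hcardP, smul_eq_mul]
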